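/- For any change-point vector τ = (τ_1 < … < τ_m) in {2,…,n} (with conventions τ_0 = 1 and τ_{m+1} = n+1), any l ∈ {1,…,m}, and any Y ∈ ℝ^n, one has Cr_0(Y,τ) − Cr_0(Y,τ^{(−l)}) = −C²(Y, (τ_{l−1}, τ_l, τ_{l+1})) + L [ 2 log( n(τ_{l+1} − τ_{l−1}) / ((τ_{l+1} − τ_l)(τ_l − τ_{l−1})) ) + q ], where τ^{(−l)} is the vector τ with the coordinate τ_l removed. -/

import Mathlib

open MeasureTheory ProbabilityTheory Finset Real

/-- independent centered 1-sub-Gaussian noise hypotheses. -/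
def IsStdSubGaussian {Ω : Type} [MeasurableSpace Ω] (P : Measure Ω) (ε : ℕ → Ω → ℝ) : Prop :=
  (∀ i, Measurable (ε i)) ∧
  iIndepFun ε P ∧
  (∀ i, ∫ ω, ε i ω ∂P = 0) ∧
  (∀ i (t : ℝ), Integrable (fun ω => Real.exp (t * ε i ω)) P) ∧
  (∀ i (t : ℝ), ∫ ω, Real.exp (t * ε i ω) ∂P ≤ Real.exp (t ^ 2 / 2))

/-- Mean of `Y` over the integer interval `[a, b)`. -/
noncomputable def segMean (Y : ℕ → ℝ) (a b : ℕ) : ℝ :=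
  (∑ i ∈ Finset.Ico a b, Y i) / ((b : ℝ) - (a : ℝ))

/-- CUSUM statistic of `Y` at the triad `(t₁, t₂, t₃)`. -/
noncomputable def cusum (Y : ℕ → ℝ) (t₁ t₂ t₃ : ℕ) : ℝ :=
  (segMean Y t₂ t₃ - segMean Y t₁ t₂) *
    Real.sqrt ((((t₂ : ℝ) - t₁) * ((t₃ : ℝ) - t₂)) / ((t₃ : ℝ) - t₁))

/-- Largest boundary point (element of `S ∪ {1}`) which is `≤ i`. -/
def prevPt (S : Finset ℕ) (i : ℕ) : ℕ :=
  if h : ((insert 1 S).filter (fun s => s ≤ i)).Nonempty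
  then ((insert 1 S).filter (fun s => s ≤ i)).max' h else 1

/-- Smallest boundary point (element of `S ∪ {n+1}`) which is `> i`. -/
def nextPt (n : ℕ) (S : Finset ℕ) (i : ℕ) : ℕ :=
  if h : ((insert (n + 1) S).filter (fun s => i < s)).Nonempty
  then ((insert (n + 1) S).filter (fun s => i < s)).min' h else n + 1

/-- Orthogonal projection of `Y` onto vectors that are constant on each segment determined by
the change-point set `S ⊆ {2,…,n}` (the value at `i` is the mean of `Y` on the segment
containing `i`). -/
noncomputable def projCP (n : ℕ) (S : Finset ℕ) (Y : ℕ → ℝ) (i : ℕ) : ℝ :=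
  segMean Y (prevPt S i) (nextPt n S i)

/-- The multiscale penalty `pen₀(τ, q) = q|τ| + 2 Σ log(n / (τ_i - τ_{i-1}))`, where the sum runs
over the left endpoints of the segments determined by the change-point set `S`. -/
noncomputable def pen0 (n : ℕ) (q : ℝ) (S : Finset ℕ) : ℝ :=
  q * S.card + 2 * ∑ s ∈ insert 1 S, Real.log ((n : ℝ) / ((nextPt n S s : ℝ) - (s : ℝ)))

/-- The multiscale penalized least-squares criterion
`Cr₀(Y, τ) = ‖Y - Π_τ Y‖² + L pen₀(τ, q)`. -/
noncomputable def Cr0 (n : ℕ) (L q : ℝ) (Y : ℕ → ℝ) (S : Finset ℕ) : ℝ :=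
  (∑ i ∈ Finset.Icc 1 n, (Y i - projCP n S Y i) ^ 2) + L * pen0 n q S

/-!
Write `a` and `c` for the change points (or boundaries `1`, `n + 1`) adjacent to `s`. Removing
`s` merges the segments `[a, s)` and `[s, c)` into `[a, c)` and leaves every other segment, hence
the projection outside `[a, c)` and every other penalty term, unchanged. On `[a, c)` the increase
of the residual sum of squares is the between-segment sum of squares
`(s - a)(c - s)/(c - a) · (ȳ_{[s,c)} - ȳ_{[a,s)})² = C²(Y, (a, s, c))`, while the penalty loses
`q` and the terms `log (n/(s - a))`, `log (n/(c - s))` in exchange for `log (n/(c - a))`.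
-/

section Boundaries

variable {n : ℕ} {S : Finset ℕ} {i p s t : ℕ}

lemma prevPt_mem : prevPt S i ∈ insert 1 S := by
  unfold prevPt
  split_ifs with h
  · exact (mem_filter.1 (max'_mem _ h)).1
  · exact mem_insert_self _ _

lemma le_prevPt (ht : t ∈ insert 1 S) (hti : t ≤ i) : t ≤ prevPt S i := by
  have hmem : t ∈ (insert 1 S).filter (· ≤ i) := mem_filter.2 ⟨ht, hti⟩
  rw [prevPt, dif_pos ⟨t, hmem⟩]
  exact le_max' _ _ hmem

lemma prevPt_le (ht : t ∈ insert 1 S) (hti : t ≤ i) : prevPt S i ≤ i := by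
  have hne : ((insert 1 S).filter (· ≤ i)).Nonempty := ⟨t, mem_filter.2 ⟨ht, hti⟩⟩
  rw [prevPt, dif_pos hne]
  exact (mem_filter.1 (max'_mem _ hne)).2

lemma prevPt_erase_of_ne (h : prevPt S i ≠ s) : prevPt (S.erase s) i = prevPt S i := by
  have hsub : (insert 1 (S.erase s)).filter (· ≤ i) ⊆ (insert 1 S).filter (· ≤ i) :=
    filter_subset_filter _ (insert_subset_insert _ (erase_subset _ _))
  unfold prevPt at h ⊢
  by_cases hne : ((insert 1 S).filter (· ≤ i)).Nonempty
  · rw [dif_pos hne] at h ⊢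
    have hmem : ((insert 1 S).filter (· ≤ i)).max' hne ∈ (insert 1 (S.erase s)).filter (· ≤ i) := by
      have := max'_mem _ hne
      simp only [mem_filter, mem_insert, mem_erase] at this ⊢
      tauto
    rw [dif_pos ⟨_, hmem⟩]
    exact le_antisymm (max'_subset _ hsub) (le_max' _ _ hmem)
  · rw [dif_neg hne, dif_neg fun hne' => hne (hne'.mono hsub)]

lemma nextPt_mem : nextPt n S i ∈ insert (n + 1) S := by
  unfold nextPt
  split_ifs with h
  · exact (mem_filter.1 (min'_mem _ h)).1
  · exact mem_insert_self _ _

lemma nextPt_le (ht : t ∈ insert (n + 1) S) (hit : i < t) : nextPt n S i ≤ t := by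
  have hmem : t ∈ (insert (n + 1) S).filter (i < ·) := mem_filter.2 ⟨ht, hit⟩
  rw [nextPt, dif_pos ⟨t, hmem⟩]
  exact min'_le _ _ hmem

lemma lt_nextPt (ht : t ∈ insert (n + 1) S) (hit : i < t) : i < nextPt n S i := by
  have hne : ((insert (n + 1) S).filter (i < ·)).Nonempty := ⟨t, mem_filter.2 ⟨ht, hit⟩⟩
  rw [nextPt, dif_pos hne]
  exact (mem_filter.1 (min'_mem _ hne)).2

lemma nextPt_erase_of_ne (h : nextPt n S i ≠ s) : nextPt n (S.erase s) i = nextPt n S i := by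
  have hsub : (insert (n + 1) (S.erase s)).filter (i < ·) ⊆ (insert (n + 1) S).filter (i < ·) :=
    filter_subset_filter _ (insert_subset_insert _ (erase_subset _ _))
  unfold nextPt at h ⊢
  by_cases hne : ((insert (n + 1) S).filter (i < ·)).Nonempty
  · rw [dif_pos hne] at h ⊢
    have hmem : ((insert (n + 1) S).filter (i < ·)).min' hne ∈
        (insert (n + 1) (S.erase s)).filter (i < ·) := by
      have := min'_mem _ hne
      simp only [mem_filter, mem_insert, mem_erase] at this ⊢
      tauto
    rw [dif_pos ⟨_, hmem⟩]
    exact le_antisymm (min'_le _ _ hmem) (min'_subset _ hsub)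
  · rw [dif_neg hne, dif_neg fun hne' => hne (hne'.mono hsub)]

lemma projCP_eq_of_mem_segment (Y : ℕ → ℝ) (hp : p ∈ insert 1 S) (h1p : 1 ≤ p) (hpi : p ≤ i)
    (hi : i < nextPt n S p) : projCP n S Y i = segMean Y p (nextPt n S p) := by
  have hprev : prevPt S i = p := by
    refine le_antisymm ?_ (le_prevPt hp hpi)
    by_contra! hlt
    have hS : prevPt S i ∈ insert (n + 1) S :=
      mem_insert_of_mem (mem_of_mem_insert_of_ne prevPt_mem (by omega))
    have := nextPt_le hS hlt
    have := prevPt_le hp hpi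
    omega
  have hnext : nextPt n S i = nextPt n S p :=
    le_antisymm (nextPt_le nextPt_mem (by omega))
      (nextPt_le nextPt_mem (hpi.trans_lt (lt_nextPt nextPt_mem hi)))
  rw [projCP, hprev, hnext]

end Boundaries

section Removal

variable {n : ℕ} {S : Finset ℕ} {i s : ℕ}

lemma prevPt_pred_lt (h2s : 2 ≤ s) : prevPt S (s - 1) < s := by
  have := prevPt_le (S := S) (mem_insert_self 1 S) (by omega : 1 ≤ s - 1)
  omega

lemma prevPt_pred_mem_insert_erase (h2s : 2 ≤ s) : prevPt S (s - 1) ∈ insert 1 (S.erase s) := by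
  rcases mem_insert.1 (prevPt_mem (S := S) (i := s - 1)) with h | h
  · exact mem_insert.2 (Or.inl h)
  · exact mem_insert_of_mem (mem_erase.2 ⟨(prevPt_pred_lt h2s).ne, h⟩)

lemma nextPt_lt_of_lt_prevPt_pred (h2s : 2 ≤ s) (h1i : 1 ≤ i) (hi : i < prevPt S (s - 1)) :
    nextPt n S i < s := by
  have haS : prevPt S (s - 1) ∈ S := mem_of_mem_insert_of_ne prevPt_mem (by omega)
  have := nextPt_le (n := n) (mem_insert_of_mem haS) hi
  have := prevPt_pred_lt (S := S) h2s
  omega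

lemma nextPt_prevPt_pred (hs : s ∈ S) (h2s : 2 ≤ s) (hsn : s ≤ n) :
    nextPt n S (prevPt S (s - 1)) = s := by
  have has := prevPt_pred_lt (S := S) h2s
  refine le_antisymm (nextPt_le (mem_insert_of_mem hs) has) ?_
  by_contra! hlt
  have hS : nextPt n S (prevPt S (s - 1)) ∈ insert 1 S :=
    mem_insert_of_mem (mem_of_mem_insert_of_ne nextPt_mem (by omega))
  have := le_prevPt hS (by omega : nextPt n S (prevPt S (s - 1)) ≤ s - 1)
  have := lt_nextPt (n := n) (mem_insert_of_mem hs) has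
  omega

lemma nextPt_erase_of_nextPt_eq (hsn : s ≤ n) (hi : i < s) (h : nextPt n S i = s) :
    nextPt n (S.erase s) i = nextPt n S s := by
  have hs : s < nextPt n S s := lt_nextPt (mem_insert_self (n + 1) S) (by omega)
  have hmem : nextPt n S s ∈ insert (n + 1) (S.erase s) := by
    have := nextPt_mem (n := n) (S := S) (i := s)
    simp only [mem_insert, mem_erase] at this ⊢
    exact this.imp_right fun h' => ⟨hs.ne', h'⟩
  refine le_antisymm (nextPt_le hmem (by omega)) ?_
  set m := nextPt n (S.erase s) i
  have hm : m = n + 1 ∨ m ≠ s ∧ m ∈ S := by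
    simpa only [mem_insert, mem_erase] using (nextPt_mem : m ∈ insert (n + 1) (S.erase s))
  have hmS : m ∈ insert (n + 1) S := by
    rcases hm with h' | h'
    · exact h' ▸ mem_insert_self _ _
    · exact mem_insert_of_mem h'.2
  have hsm : s ≤ m := h ▸ nextPt_le hmS (lt_nextPt hmem (by omega))
  exact nextPt_le hmS (by rcases hm with h' | h' <;> omega)

lemma nextPt_erase_prevPt_pred (hs : s ∈ S) (h2s : 2 ≤ s) (hsn : s ≤ n) :
    nextPt n (S.erase s) (prevPt S (s - 1)) = nextPt n S s :=
  nextPt_erase_of_nextPt_eq hsn (prevPt_pred_lt h2s) (nextPt_prevPt_pred hs h2s hsn)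

lemma insert_one_subset_Icc (hS : S ⊆ Icc 2 n) (hn : 1 ≤ n) : insert 1 S ⊆ Icc 1 n :=
  insert_subset (mem_Icc.2 ⟨le_rfl, hn⟩) (hS.trans (Icc_subset_Icc_left one_le_two))

lemma projCP_erase_of_lt_or_le (Y : ℕ → ℝ) (hS : S ⊆ Icc 2 n) (hs : s ∈ S)
    (h1i : 1 ≤ i) (hin : i ≤ n) (hi : i < prevPt S (s - 1) ∨ nextPt n S s ≤ i) :
    projCP n (S.erase s) Y i = projCP n S Y i := by
  obtain ⟨h2s, hsn⟩ := mem_Icc.1 (hS hs)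
  rw [projCP, projCP]
  rcases hi with hi | hi
  · have := prevPt_le (S := S) (mem_insert_self 1 S) h1i
    have := prevPt_pred_lt (S := S) h2s
    rw [prevPt_erase_of_ne (by omega),
      nextPt_erase_of_ne (nextPt_lt_of_lt_prevPt_pred h2s h1i hi).ne]
  · have := lt_nextPt (n := n) (S := S) (mem_insert_self (n + 1) S) (by omega : s < n + 1)
    have hc : nextPt n S s ∈ S := mem_of_mem_insert_of_ne nextPt_mem (by omega)
    have := le_prevPt (mem_insert_of_mem hc) hi
    have := lt_nextPt (n := n) (S := S) (mem_insert_self (n + 1) S) (by omega : i < n + 1)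
    rw [prevPt_erase_of_ne (by omega), nextPt_erase_of_ne (by omega)]

end Removal

lemma sum_sub_sq {ι : Type*} (A : Finset ι) (Y : ι → ℝ) (m : ℝ) :
    ∑ i ∈ A, (Y i - m) ^ 2 = ∑ i ∈ A, Y i ^ 2 - 2 * m * ∑ i ∈ A, Y i + #A * m ^ 2 := by
  simp only [sub_sq, sum_add_distrib, sum_sub_distrib, ← sum_mul, ← mul_sum, sum_const,
    nsmul_eq_mul]
  ring

lemma sum_sq_sub_segMean_split (Y : ℕ → ℝ) {a s c : ℕ} (has : a < s) (hsc : s < c) :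
    ∑ i ∈ Ico a s, (Y i - segMean Y a s) ^ 2 + ∑ i ∈ Ico s c, (Y i - segMean Y s c) ^ 2 =
      ∑ i ∈ Ico a c, (Y i - segMean Y a c) ^ 2 - cusum Y a s c ^ 2 := by
  have hsum : ∑ i ∈ Ico a c, Y i = ∑ i ∈ Ico a s, Y i + ∑ i ∈ Ico s c, Y i :=
    (sum_Ico_consecutive _ has.le hsc.le).symm
  have hsq : ∑ i ∈ Ico a c, Y i ^ 2 = ∑ i ∈ Ico a s, Y i ^ 2 + ∑ i ∈ Ico s c, Y i ^ 2 :=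
    (sum_Ico_consecutive _ has.le hsc.le).symm
  have hca : (c : ℝ) - a = (s - a) + (c - s) := by ring
  have hn₁ : (0 : ℝ) < s - a := sub_pos.2 (by exact_mod_cast has)
  have hn₂ : (0 : ℝ) < c - s := sub_pos.2 (by exact_mod_cast hsc)
  rw [cusum, mul_pow, Real.sq_sqrt (div_nonneg (mul_nonneg hn₁.le hn₂.le) (by linarith))]
  simp only [sum_sub_sq, Nat.card_Ico, Nat.cast_sub has.le, Nat.cast_sub hsc.le,
    Nat.cast_sub (has.trans hsc).le, segMean, hsum, hsq, hca]
  generalize (s : ℝ) - a = n₁ at *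
  generalize (c : ℝ) - s = n₂ at *
  field_simp
  ring

section CriterionDifference

variable {n : ℕ} {S : Finset ℕ} {s : ℕ}

lemma residual_sub_residual_erase (Y : ℕ → ℝ) (hS : S ⊆ Icc 2 n) (hs : s ∈ S) :
    ∑ i ∈ Icc 1 n, (Y i - projCP n S Y i) ^ 2 -
        ∑ i ∈ Icc 1 n, (Y i - projCP n (S.erase s) Y i) ^ 2 =
      -cusum Y (prevPt S (s - 1)) s (nextPt n S s) ^ 2 := by
  obtain ⟨h2s, hsn⟩ := mem_Icc.1 (hS hs)
  set a := prevPt S (s - 1)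
  set c := nextPt n S s
  have ha : a ∈ insert 1 S := prevPt_mem
  have h1a : 1 ≤ a := (mem_Icc.1 (insert_one_subset_Icc hS (by omega) ha)).1
  have has : a < s := prevPt_pred_lt h2s
  have hsc : s < c := lt_nextPt (mem_insert_self (n + 1) S) (by omega)
  have hcn : c ≤ n + 1 := by
    rcases mem_insert.1 (nextPt_mem : c ∈ insert (n + 1) S) with h | h
    · omega
    · exact (mem_Icc.1 (hS h)).2.trans n.le_succ
  have hnext_a : nextPt n S a = s := nextPt_prevPt_pred hs h2s hsn
  have hnextE_a : nextPt n (S.erase s) a = c := nextPt_erase_prevPt_pred hs h2s hsn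
  have hsub : Ico a c ⊆ Icc 1 n := fun i hi => by
    rw [mem_Ico] at hi
    exact mem_Icc.2 ⟨by omega, by omega⟩
  have hout : ∀ i ∈ Icc 1 n \ Ico a c,
      (Y i - projCP n (S.erase s) Y i) ^ 2 = (Y i - projCP n S Y i) ^ 2 := fun i hi => by
    simp only [mem_sdiff, mem_Icc, mem_Ico, not_and_or, not_le, not_lt] at hi
    rw [projCP_erase_of_lt_or_le Y hS hs hi.1.1 hi.1.2 (by omega)]
  have hin : ∑ i ∈ Ico a c, (Y i - projCP n S Y i) ^ 2 =
      ∑ i ∈ Ico a s, (Y i - segMean Y a s) ^ 2 + ∑ i ∈ Ico s c, (Y i - segMean Y s c) ^ 2 := by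
    rw [← sum_Ico_consecutive _ has.le hsc.le]
    congr 1 <;> refine sum_congr rfl fun i hi => ?_ <;> rw [mem_Ico] at hi
    · rw [projCP_eq_of_mem_segment Y ha h1a hi.1 (hnext_a ▸ hi.2), hnext_a]
    · rw [projCP_eq_of_mem_segment Y (mem_insert_of_mem hs) (by omega) hi.1 hi.2]
  have hinE : ∑ i ∈ Ico a c, (Y i - projCP n (S.erase s) Y i) ^ 2 =
      ∑ i ∈ Ico a c, (Y i - segMean Y a c) ^ 2 := by
    refine sum_congr rfl fun i hi => ?_
    rw [mem_Ico] at hi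
    rw [projCP_eq_of_mem_segment Y (prevPt_pred_mem_insert_erase h2s) h1a hi.1
      (hnextE_a ▸ hi.2), hnextE_a]
  rw [← sum_sdiff hsub, ← sum_sdiff hsub (f := fun i => (Y i - projCP n (S.erase s) Y i) ^ 2),
    sum_congr rfl hout, hin, hinE, sum_sq_sub_segMean_split Y has hsc]
  ring

lemma log_div_add_log_div_sub_log_div {n a s c : ℝ} (hn : 0 < n) (has : a < s) (hsc : s < c) :
    Real.log (n / (c - s)) + (Real.log (n / (s - a)) - Real.log (n / (c - a))) =
      Real.log (n * (c - a) / ((c - s) * (s - a))) := by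
  have h₁ : 0 < s - a := sub_pos.2 has
  have h₂ : 0 < c - s := sub_pos.2 hsc
  have h₃ : 0 < c - a := by linarith
  rw [← Real.log_div (div_pos hn h₁).ne' (div_pos hn h₃).ne',
    ← Real.log_mul (div_pos hn h₂).ne' (div_pos (div_pos hn h₁) (div_pos hn h₃)).ne']
  congr 1
  field_simp

lemma pen0_sub_pen0_erase (q : ℝ) (hS : S ⊆ Icc 2 n) (hs : s ∈ S) :
    pen0 n q S - pen0 n q (S.erase s) =
      2 * Real.log ((n : ℝ) * ((nextPt n S s : ℝ) - (prevPt S (s - 1) : ℝ)) /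
        (((nextPt n S s : ℝ) - (s : ℝ)) * ((s : ℝ) - (prevPt S (s - 1) : ℝ)))) + q := by
  obtain ⟨h2s, hsn⟩ := mem_Icc.1 (hS hs)
  set a := prevPt S (s - 1)
  set c := nextPt n S s
  have haE : a ∈ insert 1 (S.erase s) := prevPt_pred_mem_insert_erase h2s
  have hsE : s ∉ insert 1 (S.erase s) := by
    simp only [mem_insert, mem_erase, ne_eq, not_true_eq_false, false_and, or_false]
    omega
  have hnext : ∀ t ∈ insert 1 (S.erase s), t ≠ a → nextPt n (S.erase s) t = nextPt n S t := by
    intro t ht hta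
    have htS : t ∈ insert 1 S := insert_subset_insert _ (erase_subset _ _) ht
    have h1t := mem_Icc.1 (insert_one_subset_Icc hS (by omega) htS)
    refine nextPt_erase_of_ne ?_
    rcases lt_or_gt_of_ne (fun h => hsE (h ▸ ht) : t ≠ s) with h | h
    · have := le_prevPt htS (by omega : t ≤ s - 1)
      exact (nextPt_lt_of_lt_prevPt_pred h2s h1t.1 (lt_of_le_of_ne this hta)).ne
    · exact (h.trans (lt_nextPt (mem_insert_self (n + 1) S) (by omega))).ne'
  have hsum : ∑ t ∈ insert 1 (S.erase s), Real.log (n / ((nextPt n S t : ℝ) - t)) =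
      ∑ t ∈ insert 1 (S.erase s), Real.log (n / ((nextPt n (S.erase s) t : ℝ) - t)) +
        (Real.log (n / (s - a)) - Real.log (n / (c - a))) := by
    rw [← add_sum_erase _ _ haE, ← add_sum_erase _ _ haE, nextPt_prevPt_pred hs h2s hsn,
      nextPt_erase_prevPt_pred hs h2s hsn,
      sum_congr rfl fun t ht => by rw [← hnext t (mem_of_mem_erase ht) (ne_of_mem_erase ht)]]
    ring
  have hcard : (#S : ℝ) = #(S.erase s) + 1 := by exact_mod_cast (card_erase_add_one hs).symm
  have hins : insert 1 S = insert s (insert 1 (S.erase s)) := by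
    rw [insert_comm, insert_erase hs]
  rw [pen0, pen0, hcard, hins, sum_insert hsE, hsum,
    ← log_div_add_log_div_sub_log_div (by exact_mod_cast (by omega : 0 < n))
      (by exact_mod_cast prevPt_pred_lt h2s : (a : ℝ) < s)
      (by exact_mod_cast lt_nextPt (mem_insert_self (n + 1) S) (by omega) : (s : ℝ) < c)]
  ring

end CriterionDifference

theorem criterion_difference_one_change_point
    (n : ℕ) (L q : ℝ) (Y : ℕ → ℝ) (S : Finset ℕ) (hS : S ⊆ Finset.Icc 2 n)
    (s : ℕ) (hs : s ∈ S) :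
    Cr0 n L q Y S - Cr0 n L q Y (S.erase s) =
      -(cusum Y (prevPt S (s - 1)) s (nextPt n S s)) ^ 2 +
        L * (2 * Real.log ((n : ℝ) * ((nextPt n S s : ℝ) - (prevPt S (s - 1) : ℝ)) /
              (((nextPt n S s : ℝ) - (s : ℝ)) * ((s : ℝ) - (prevPt S (s - 1) : ℝ)))) + q) := by
  have hres := residual_sub_residual_erase Y hS hs
  have hpen := pen0_sub_pen0_erase q hS hs
  rw [Cr0, Cr0]
  linear_combination hres + L * hpen
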